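/- Let θ and A be real 2×2 matrices with Aθ = θA and A ≠ 0, let ξ ∈ ℝ², and let n ∈ ℝ² be nonzero, with n^⊥ = {x ∈ ℝ² : ⟨x,n⟩ = 0}. Assume that at least one of the following holds: θ(n^⊥) ⊄ n^⊥, or A(n^⊥) ⊄ n^⊥, or ξ ∉ n^⊥. Then the zero set F⁻¹({0}) ⊆ ℝ × ℝ² is connected, and the sets F⁻¹((−∞,0)) and F⁻¹((0,+∞)) are nonempty, open and connected; in particular, the complement of F⁻¹({0}) in ℝ × ℝ² has exactly two connected components, namely F⁻¹((−∞,0)) and F⁻¹((0,+∞)). -/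

import Mathlib

/-!
Write `F(t, v) = ⟨v, g(t)⟩ + F(t, 0)` with `g(t) = (exp(-tθ) A)ᵀ n`. If `Aᵀ n ≠ 0` then, since `A`
commutes with `θ`, `g(t) = exp(-tθ)ᵀ Aᵀ n` never vanishes, and the map
`(p, a) ↦ p + (0, (a - F p) g / |g|²)` sends `(ℝ × ℝ²) × s` continuously onto `F⁻¹(s)`, which is
therefore connected for every interval `s`.
If `Aᵀ n = 0`, then `Aᵀ ≠ 0` also kills `θᵀ n`, so in the plane `θᵀ n = l n`; this rules out the
first two alternatives, so `⟨ξ, n⟩ ≠ 0`, and `F(t, v) = e^{-tl} (∫₀ᵗ e^{sl} ds) ⟨ξ, n⟩` has the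
sign of `⟨ξ, n⟩ t`. In both cases the sets `F⁻¹(0)`, `F⁻¹(-∞, 0)`, `F⁻¹(0, ∞)` are connected, and
the two open ones are then the components of the complement of the first.
-/

open Matrix

/-- The matrix exponential. -/
noncomputable def mexp (B : Matrix (Fin 2) (Fin 2) ℝ) : Matrix (Fin 2) (Fin 2) ℝ :=
  NormedSpace.exp B

/-- `Λ^B_t = ∫₀^t exp(sB) ds`, taken entrywise. -/
noncomputable def Lam (B : Matrix (Fin 2) (Fin 2) ℝ) (t : ℝ) : Matrix (Fin 2) (Fin 2) ℝ :=
  Matrix.of fun i j => ∫ s in (0:ℝ)..t, mexp (s • B) i j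

/-- `F(t,v) = ⟨exp(−tθ)(Av + Λ^θ_t ξ), n⟩`. -/
noncomputable def Fu (θ A : Matrix (Fin 2) (Fin 2) ℝ) (ξ n : Fin 2 → ℝ)
    (p : ℝ × (Fin 2 → ℝ)) : ℝ :=
  (mexp ((-p.1) • θ) *ᵥ (A *ᵥ p.2 + Lam θ p.1 *ᵥ ξ)) ⬝ᵥ n

theorem mulVec_dotProduct_eq_dotProduct_transpose_mulVec {m n α : Type*} [Fintype m] [Fintype n]
    [CommSemiring α] (M : Matrix m n α) (x : n → α) (y : m → α) :
    (M *ᵥ x) ⬝ᵥ y = x ⬝ᵥ (Mᵀ *ᵥ y) := by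
  rw [dotProduct_transpose_mulVec, dotProduct_comm]

open scoped Norms.Operator in
theorem Matrix.exp_mulVec_of_mulVec_eq_smul {m : Type*} [Fintype m] [DecidableEq m]
    {B : Matrix m m ℝ} {x : m → ℝ} {l : ℝ} (h : B *ᵥ x = l • x) :
    NormedSpace.exp B *ᵥ x = Real.exp l • x := by
  cases isEmpty_or_nonempty m
  · exact Subsingleton.elim _ _
  -- The matrix all of whose columns are `x` intertwines `l • 1` with `B`, hence their exponentials.
  have hsemi : SemiconjBy (replicateCol m x) (algebraMap ℝ _ l) B := by
    rw [SemiconjBy, Algebra.algebraMap_eq_smul_one, mul_smul_one, ← replicateCol_mulVec, h,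
      replicateCol_smul]
  have hexp := hsemi.exp_right
  rw [SemiconjBy, ← NormedSpace.algebraMap_exp_comm, Algebra.algebraMap_eq_smul_one,
    mul_smul_one, ← replicateCol_mulVec, ← Real.exp_eq_exp_ℝ, ← replicateCol_smul] at hexp
  exact (replicateCol_inj.mp hexp).symm

theorem mem_span_singleton_of_map_eq_zero {K V W : Type*} [Field K] [AddCommGroup V] [Module K V]
    [AddCommGroup W] [Module K W] (hV : Module.finrank K V = 2) {f : V →ₗ[K] W} (hf : f ≠ 0)
    {v w : V} (hv : v ≠ 0) (hfv : f v = 0) (hfw : f w = 0) : w ∈ K ∙ v := by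
  by_contra hw
  have hli : LinearIndependent K ![w, v] :=
    linearIndependent_fin2.mpr ⟨hv, fun a ha => hw (Submodule.mem_span_singleton.mpr ⟨a, ha⟩)⟩
  refine hf (LinearMap.ext_on_range (hli.span_eq_top_of_card_eq_finrank (by simp [hV])) ?_)
  simp [Fin.forall_fin_two, hfv, hfw]

theorem sign_intervalIntegral_of_pos {f : ℝ → ℝ} (hf : Continuous f) (hpos : ∀ s, 0 < f s)
    (t : ℝ) : SignType.sign (∫ s in (0:ℝ)..t, f s) = SignType.sign t := by
  rcases lt_trichotomy t 0 with ht | rfl | ht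
  · rw [intervalIntegral.integral_symm, Left.sign_neg,
      sign_pos (intervalIntegral.intervalIntegral_pos_of_pos (hf.intervalIntegrable _ _) hpos ht),
      sign_neg ht]
  · simp
  · rw [sign_pos (intervalIntegral.intervalIntegral_pos_of_pos (hf.intervalIntegrable _ _) hpos ht),
      sign_pos ht]

section Topology

variable {X : Type*} [TopologicalSpace X]

theorem isConnected_preimage_of_flow [ConnectedSpace X] {f : X → ℝ} (hf : Continuous f)
    {Φ : X → ℝ → X} (hΦ : Continuous fun q : X × ℝ => Φ q.1 q.2) (hΦ0 : ∀ p, Φ p 0 = p)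
    (hfΦ : ∀ p a, f (Φ p a) = f p + a) {s : Set ℝ} (hs : IsConnected s) :
    IsConnected (f ⁻¹' s) := by
  have himage : f ⁻¹' s = (fun q : X × ℝ => Φ q.1 (q.2 - f q.1)) '' (Set.univ ×ˢ s) := by
    ext p
    constructor
    · exact fun hp => ⟨(p, f p), ⟨trivial, hp⟩, by simp [hΦ0]⟩
    · rintro ⟨q, ⟨-, hq⟩, rfl⟩
      simpa [hfΦ] using hq
  rw [himage]
  exact (isConnected_univ.prod hs).image _ <|
    (hΦ.comp (continuous_fst.prodMk (continuous_snd.sub (hf.comp continuous_fst)))).continuousOn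

theorem isConnected_preimage_mul_fst {E : Type*} [TopologicalSpace E] [ConnectedSpace E]
    {c : ℝ} (hc : c ≠ 0) {s : Set ℝ} (hs : IsConnected s) :
    IsConnected ((fun p : ℝ × E => c * p.1) ⁻¹' s) :=
  isConnected_preimage_of_flow (Φ := fun p a => (p.1 + a / c, p.2)) (by fun_prop) (by fun_prop)
    (by simp) (fun p a => by field_simp) hs

theorem isConnected_sign_preimage (σ : SignType) :
    IsConnected (SignType.sign ⁻¹' {σ} : Set ℝ) := by
  rcases σ with _ | _ | _
  · convert isConnected_singleton (x := (0:ℝ)) using 1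
    ext; simp
  · convert isConnected_Iio (a := (0:ℝ)) using 1
    ext; simp [sign_eq_neg_one_iff]
  · convert isConnected_Ioi (a := (0:ℝ)) using 1
    ext; simp [sign_eq_one_iff]

theorem connectedComponentIn_union_eq_or_eq {U V : Set X} (hUo : IsOpen U) (hVo : IsOpen V)
    (hUc : IsConnected U) (hVc : IsConnected V) (hUV : Disjoint U V) {x : X} (hx : x ∈ U ∪ V) :
    connectedComponentIn (U ∪ V) x = U ∨ connectedComponentIn (U ∪ V) x = V := by
  have hsub := connectedComponentIn_subset (U ∪ V) x
  have hpre : IsPreconnected (connectedComponentIn (U ∪ V) x) :=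
    isPreconnected_connectedComponentIn
  have hmem : x ∈ connectedComponentIn (U ∪ V) x := mem_connectedComponentIn hx
  rcases hx with hxU | hxV
  · exact .inl <| subset_antisymm
      (hpre.subset_left_of_subset_union hUo hVo hUV hsub ⟨x, hmem, hxU⟩)
      (hUc.isPreconnected.subset_connectedComponentIn hxU Set.subset_union_left)
  · exact .inr <| subset_antisymm
      (hpre.subset_right_of_subset_union hUo hVo hUV hsub ⟨x, hmem, hxV⟩)
      (hVc.isPreconnected.subset_connectedComponentIn hxV Set.subset_union_right)

theorem sign_components_of_isConnected {f : X → ℝ} (hf : Continuous f)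
    (hconn : ∀ σ : SignType, IsConnected ((SignType.sign ∘ f) ⁻¹' {σ})) :
    IsConnected (f ⁻¹' {0}) ∧
      (IsOpen (f ⁻¹' Set.Iio 0) ∧ IsConnected (f ⁻¹' Set.Iio 0)) ∧
      (IsOpen (f ⁻¹' Set.Ioi 0) ∧ IsConnected (f ⁻¹' Set.Ioi 0)) ∧
      (f ⁻¹' {0})ᶜ = f ⁻¹' Set.Iio 0 ∪ f ⁻¹' Set.Ioi 0 ∧
      Disjoint (f ⁻¹' Set.Iio 0) (f ⁻¹' Set.Ioi 0) ∧
      ∀ p ∈ (f ⁻¹' {0})ᶜ,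
        connectedComponentIn (f ⁻¹' {0})ᶜ p = f ⁻¹' Set.Iio 0 ∨
        connectedComponentIn (f ⁻¹' {0})ᶜ p = f ⁻¹' Set.Ioi 0 := by
  have hzero : (SignType.sign ∘ f) ⁻¹' {0} = f ⁻¹' {0} := by ext; simp
  have hneg : (SignType.sign ∘ f) ⁻¹' {-1} = f ⁻¹' Set.Iio 0 := by
    ext; simp [sign_eq_neg_one_iff]
  have hpos : (SignType.sign ∘ f) ⁻¹' {1} = f ⁻¹' Set.Ioi 0 := by ext; simp [sign_eq_one_iff]
  have hnegc := hneg ▸ hconn (-1)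
  have hposc := hpos ▸ hconn 1
  have hnego : IsOpen (f ⁻¹' Set.Iio 0) := isOpen_Iio.preimage hf
  have hposo : IsOpen (f ⁻¹' Set.Ioi 0) := isOpen_Ioi.preimage hf
  have hcompl : (f ⁻¹' {0})ᶜ = f ⁻¹' Set.Iio 0 ∪ f ⁻¹' Set.Ioi 0 := by
    ext; simp [lt_or_lt_iff_ne]
  have hdisj : Disjoint (f ⁻¹' Set.Iio 0) (f ⁻¹' Set.Ioi 0) :=
    Set.Ioi_disjoint_Iio_same.symm.preimage f
  refine ⟨hzero ▸ hconn 0, ⟨hnego, hnegc⟩, ⟨hposo, hposc⟩, hcompl, hdisj, fun p hp => ?_⟩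
  rw [hcompl] at hp ⊢
  exact connectedComponentIn_union_eq_or_eq hnego hposo hnegc hposc hdisj hp

end Topology

open scoped Norms.Operator in
theorem continuous_mexp_smul (B : Matrix (Fin 2) (Fin 2) ℝ) :
    Continuous fun t : ℝ => mexp (t • B) :=
  NormedSpace.exp_continuous.comp (continuous_id.smul continuous_const)

theorem continuous_Lam (B : Matrix (Fin 2) (Fin 2) ℝ) : Continuous (Lam B) :=
  continuous_pi fun i => continuous_pi fun j => intervalIntegral.continuous_primitive
    (fun _ _ => ((continuous_mexp_smul B).matrix_elem i j).intervalIntegrable _ _) 0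

theorem continuous_Fu (θ A : Matrix (Fin 2) (Fin 2) ℝ) (ξ n : Fin 2 → ℝ) :
    Continuous (Fu θ A ξ n) := by
  have hexp : Continuous fun p : ℝ × (Fin 2 → ℝ) => mexp ((-p.1) • θ) :=
    (continuous_mexp_smul θ).comp continuous_fst.neg
  have hLam : Continuous fun p : ℝ × (Fin 2 → ℝ) => Lam θ p.1 :=
    (continuous_Lam θ).comp continuous_fst
  unfold Fu
  fun_prop

theorem Lam_mulVec_dotProduct (θ : Matrix (Fin 2) (Fin 2) ℝ) (ξ n : Fin 2 → ℝ) (t : ℝ) :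
    (Lam θ t *ᵥ ξ) ⬝ᵥ n = ∫ s in (0:ℝ)..t, (mexp (s • θ) *ᵥ ξ) ⬝ᵥ n := by
  have hexp := continuous_mexp_smul θ
  simp only [Lam, mulVec, dotProduct, of_apply]
  rw [intervalIntegral.integral_finsetSum fun i _ =>
    Continuous.intervalIntegrable (by fun_prop) _ _]
  refine Finset.sum_congr rfl fun i _ => ?_
  rw [intervalIntegral.integral_mul_const,
    intervalIntegral.integral_finsetSum fun j _ => Continuous.intervalIntegrable (by fun_prop) _ _]
  simp only [intervalIntegral.integral_mul_const]

noncomputable def gradFu (θ A : Matrix (Fin 2) (Fin 2) ℝ) (n : Fin 2 → ℝ) (t : ℝ) : Fin 2 → ℝ :=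
  (mexp ((-t) • θ) * A)ᵀ *ᵥ n

theorem Fu_add_snd (θ A : Matrix (Fin 2) (Fin 2) ℝ) (ξ n : Fin 2 → ℝ) (t : ℝ) (v w : Fin 2 → ℝ) :
    Fu θ A ξ n (t, v + w) = Fu θ A ξ n (t, v) + w ⬝ᵥ gradFu θ A n t := by
  simp only [Fu, gradFu, mulVec_add, add_right_comm _ (A *ᵥ w), add_dotProduct,
    ← mulVec_dotProduct_eq_dotProduct_transpose_mulVec, mulVec_mulVec]

theorem continuous_gradFu (θ A : Matrix (Fin 2) (Fin 2) ℝ) (n : Fin 2 → ℝ) :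
    Continuous (gradFu θ A n) := by
  have hexp : Continuous fun t : ℝ => mexp ((-t) • θ) :=
    (continuous_mexp_smul θ).comp continuous_neg
  unfold gradFu
  fun_prop

open scoped Norms.Operator in
theorem gradFu_ne_zero {θ A : Matrix (Fin 2) (Fin 2) ℝ} (hcomm : A * θ = θ * A)
    {n : Fin 2 → ℝ} (hAn : Aᵀ *ᵥ n ≠ 0) (t : ℝ) : gradFu θ A n t ≠ 0 := by
  have hA : A * mexp ((-t) • θ) = mexp ((-t) • θ) * A :=
    (((show Commute A θ from hcomm).smul_right (-t)).exp_right).eq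
  rw [gradFu, ← hA, transpose_mul, ← mulVec_mulVec]
  have hinj := mulVec_injective_iff_isUnit.mpr
    ((isUnit_transpose _).mpr (Matrix.isUnit_exp ((-t) • θ)))
  exact fun h => hAn (hinj (h.trans (mulVec_zero _).symm))

theorem isConnected_preimage_Fu {θ A : Matrix (Fin 2) (Fin 2) ℝ} (hcomm : A * θ = θ * A)
    (ξ : Fin 2 → ℝ) {n : Fin 2 → ℝ} (hAn : Aᵀ *ᵥ n ≠ 0) {s : Set ℝ} (hs : IsConnected s) :
    IsConnected (Fu θ A ξ n ⁻¹' s) := by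
  set g := gradFu θ A n
  have hg : ∀ t, g t ⬝ᵥ g t ≠ 0 := fun t h =>
    gradFu_ne_zero hcomm hAn t (dotProduct_self_eq_zero.mp h)
  have hgc := continuous_gradFu θ A n
  refine isConnected_preimage_of_flow (continuous_Fu θ A ξ n)
    (Φ := fun p a => (p.1, p.2 + (a / (g p.1 ⬝ᵥ g p.1)) • g p.1))
    (by fun_prop (disch := exact fun _ => hg _)) (by simp) (fun p a => ?_) hs
  rw [Fu_add_snd, smul_dotProduct, smul_eq_mul, div_mul_cancel₀ _ (hg p.1)]

theorem exists_transpose_mulVec_eq_smul {θ A : Matrix (Fin 2) (Fin 2) ℝ} (hcomm : A * θ = θ * A)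
    (hA : A ≠ 0) {n : Fin 2 → ℝ} (hn : n ≠ 0) (hAn : Aᵀ *ᵥ n = 0) :
    ∃ l : ℝ, θᵀ *ᵥ n = l • n := by
  have hθn : θᵀ *ᵥ n ∈ ℝ ∙ n := by
    refine mem_span_singleton_of_map_eq_zero (Module.finrank_fin_fun ℝ)
      (f := Matrix.toLin' Aᵀ) (by simpa using hA) hn hAn ?_
    rw [toLin'_apply, mulVec_mulVec, ← transpose_mul, ← hcomm, transpose_mul, ← mulVec_mulVec,
      hAn, mulVec_zero]
  obtain ⟨l, hl⟩ := Submodule.mem_span_singleton.mp hθn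
  exact ⟨l, hl.symm⟩

theorem mexp_smul_transpose_mulVec {θ : Matrix (Fin 2) (Fin 2) ℝ} {n : Fin 2 → ℝ} {l : ℝ}
    (hl : θᵀ *ᵥ n = l • n) (s : ℝ) : (mexp (s • θ))ᵀ *ᵥ n = Real.exp (s * l) • n := by
  rw [mexp, ← Matrix.exp_transpose, transpose_smul]
  exact Matrix.exp_mulVec_of_mulVec_eq_smul (by rw [smul_mulVec, hl, smul_smul])

theorem Fu_of_eigen {θ A : Matrix (Fin 2) (Fin 2) ℝ} {ξ n : Fin 2 → ℝ} {l : ℝ}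
    (hAn : Aᵀ *ᵥ n = 0) (hl : θᵀ *ᵥ n = l • n) (p : ℝ × (Fin 2 → ℝ)) :
    Fu θ A ξ n p = Real.exp (-p.1 * l) * (∫ s in (0:ℝ)..p.1, Real.exp (s * l)) * (ξ ⬝ᵥ n) := by
  rw [Fu, mulVec_dotProduct_eq_dotProduct_transpose_mulVec, mexp_smul_transpose_mulVec hl,
    dotProduct_smul, add_dotProduct, mulVec_dotProduct_eq_dotProduct_transpose_mulVec A, hAn,
    dotProduct_zero, zero_add, Lam_mulVec_dotProduct]
  simp only [mulVec_dotProduct_eq_dotProduct_transpose_mulVec _ ξ, mexp_smul_transpose_mulVec hl,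
    dotProduct_smul, smul_eq_mul, intervalIntegral.integral_mul_const, mul_assoc]

theorem sign_comp_Fu_of_eigen {θ A : Matrix (Fin 2) (Fin 2) ℝ} {ξ n : Fin 2 → ℝ} {l : ℝ}
    (hAn : Aᵀ *ᵥ n = 0) (hl : θᵀ *ᵥ n = l • n) :
    SignType.sign ∘ Fu θ A ξ n = SignType.sign ∘ fun p => (ξ ⬝ᵥ n) * p.1 := by
  ext p
  rw [Function.comp_apply, Fu_of_eigen hAn hl, sign_mul, sign_mul, sign_pos (Real.exp_pos _),
    sign_intervalIntegral_of_pos (by fun_prop) (fun s => Real.exp_pos _), one_mul, mul_comm,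
    Function.comp_apply, sign_mul]

theorem stmt15 (θ A : Matrix (Fin 2) (Fin 2) ℝ) (hcomm : A * θ = θ * A) (hA : A ≠ 0)
    (ξ n : Fin 2 → ℝ) (hn : n ≠ 0)
    (hlarc : (¬ ∀ x : Fin 2 → ℝ, x ⬝ᵥ n = 0 → (θ *ᵥ x) ⬝ᵥ n = 0) ∨
             (¬ ∀ x : Fin 2 → ℝ, x ⬝ᵥ n = 0 → (A *ᵥ x) ⬝ᵥ n = 0) ∨
             ξ ⬝ᵥ n ≠ 0) :
    IsConnected (Fu θ A ξ n ⁻¹' {0}) ∧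
      (IsOpen (Fu θ A ξ n ⁻¹' Set.Iio 0) ∧ IsConnected (Fu θ A ξ n ⁻¹' Set.Iio 0)) ∧
      (IsOpen (Fu θ A ξ n ⁻¹' Set.Ioi 0) ∧ IsConnected (Fu θ A ξ n ⁻¹' Set.Ioi 0)) ∧
      (Fu θ A ξ n ⁻¹' {0})ᶜ = Fu θ A ξ n ⁻¹' Set.Iio 0 ∪ Fu θ A ξ n ⁻¹' Set.Ioi 0 ∧
      Disjoint (Fu θ A ξ n ⁻¹' Set.Iio 0) (Fu θ A ξ n ⁻¹' Set.Ioi 0) ∧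
      ∀ p ∈ (Fu θ A ξ n ⁻¹' {0})ᶜ,
        connectedComponentIn (Fu θ A ξ n ⁻¹' {0})ᶜ p = Fu θ A ξ n ⁻¹' Set.Iio 0 ∨
        connectedComponentIn (Fu θ A ξ n ⁻¹' {0})ᶜ p = Fu θ A ξ n ⁻¹' Set.Ioi 0 := by
  refine sign_components_of_isConnected (continuous_Fu θ A ξ n) fun σ => ?_
  by_cases hAn : Aᵀ *ᵥ n = 0
  · obtain ⟨l, hl⟩ := exists_transpose_mulVec_eq_smul hcomm hA hn hAn
    have hξ : ξ ⬝ᵥ n ≠ 0 := by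
      refine hlarc.resolve_left (not_not.mpr fun x hx => ?_) |>.resolve_left
        (not_not.mpr fun x _ => ?_)
      · rw [mulVec_dotProduct_eq_dotProduct_transpose_mulVec, hl, dotProduct_smul, hx, smul_zero]
      · rw [mulVec_dotProduct_eq_dotProduct_transpose_mulVec, hAn, dotProduct_zero]
    rw [sign_comp_Fu_of_eigen hAn hl, Set.preimage_comp]
    exact isConnected_preimage_mul_fst hξ (isConnected_sign_preimage σ)
  · rw [Set.preimage_comp]
    exact isConnected_preimage_Fu hcomm ξ hAn (isConnected_sign_preimage σ)
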